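/- Let X and Y be finite types, p₀ a probability distribution on Y, and f : (0,∞) → ℝ convex with f(1) = 0, extended by f(0) = lim_{x→0⁺} f(x). For a joint distribution γ on X × Y with second marginal p₀, define the privacy cost C(γ) = ∑_{x ∈ X} ∑_{y ∈ Y} p₀(y) · γ₁(x) · f(γ(x,y) / (γ₁(x) · p₀(y))), where γ₁(x) = ∑_y γ(x,y), with terms equal 0 when γ₁(x) = 0 or p₀(y) = 0. Then C is convex on the set of joint distributions on X × Y whose Y-marginal equals p₀: for γ, μ in this set and t ∈ [0,1], C(tγ + (1-t)μ) ≤ t C(γ) + (1-t) C(μ). -/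

import Mathlib

/-!
Each summand of the privacy cost is the perspective `(s, a) ↦ s f(a / s)` of `f`, evaluated at
`s = γ₁(x) p₀(y)` and `a = γ(x, y)`, both linear in `γ`. The perspective of a function convex on
`[0, ∞)` is positively homogeneous and subadditive on the cone `s ≥ 0, a ≥ 0, s = 0 → a = 0`, hence
convex there. Right-continuity of `f` at `0` is what extends its convexity from `(0, ∞)` to
`[0, ∞)`, which is needed because `γ(x, y)` may vanish while `γ₁(x) p₀(y)` does not.
-/

/-- The privacy cost `C(γ) = ∑ₓ ∑_y p₀(y) γ₁(x) f(γ(x,y)/(γ₁(x) p₀(y)))`. -/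
noncomputable def privCost {X Y : Type*} [Fintype X] [Fintype Y]
    (p₀ : Y → ℝ) (f : ℝ → ℝ) (γ : X × Y → ℝ) : ℝ :=
  ∑ x : X, ∑ y : Y,
    if (∑ y' : Y, γ (x, y')) = 0 ∨ p₀ y = 0 then 0
    else p₀ y * (∑ y' : Y, γ (x, y')) *
      f (γ (x, y) / ((∑ y' : Y, γ (x, y')) * p₀ y))

open Set Filter Topology

theorem convexOn_finset_sum {𝕜 E β ι : Type*} [Semiring 𝕜] [PartialOrder 𝕜] [AddCommMonoid E]
    [AddCommMonoid β] [PartialOrder β] [IsOrderedAddMonoid β] [SMul 𝕜 E] [Module 𝕜 β]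
    {s : Set E} (hs : Convex 𝕜 s) (t : Finset ι) {f : ι → E → β}
    (hf : ∀ i ∈ t, ConvexOn 𝕜 s (f i)) : ConvexOn 𝕜 s (∑ i ∈ t, f i) :=
  Finset.sum_induction f (ConvexOn 𝕜 s) (fun _ _ => ConvexOn.add) (convexOn_const 0 hs) hf

theorem ConvexOn.convexOn_Ici_of_continuousWithinAt {f : ℝ → ℝ} {a : ℝ}
    (hf : ConvexOn ℝ (Ioi a) f) (ha : ContinuousWithinAt f (Ioi a) a) :
    ConvexOn ℝ (Ici a) f := by
  have hcont : ContinuousOn f (Ici a) := fun z hz => by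
    rcases (mem_Ici.mp hz).eq_or_lt with rfl | hz
    · exact continuousWithinAt_Ioi_iff_Ici.mp ha
    · exact ((hf.continuousOn isOpen_Ioi).continuousAt
        (isOpen_Ioi.mem_nhds hz)).continuousWithinAt
  have shift : ∀ z ∈ Ici a, Tendsto (fun ε => f (z + ε)) (𝓝[>] 0) (𝓝 (f z)) := by
    intro z hz
    refine (hcont z hz).tendsto.comp (tendsto_nhdsWithin_iff.mpr ⟨?_, ?_⟩)
    · simpa using (continuous_const_add z).continuousWithinAt (s := Ioi 0) (x := 0) |>.tendsto
    · filter_upwards [self_mem_nhdsWithin] with ε hε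
      exact mem_Ici.mpr (by linarith [mem_Ici.mp hz, mem_Ioi.mp hε])
  refine ⟨convex_Ici a, fun x hx y hy s t hs ht hst => ?_⟩
  have hmem : s • x + t • y ∈ Ici a := (convex_Ici a) hx hy hs ht hst
  have shifted : ∀ ε > 0, f (s • x + t • y + ε) ≤ s • f (x + ε) + t • f (y + ε) := by
    intro ε hε
    have hxε : x + ε ∈ Ioi a := mem_Ioi.mpr (by linarith [mem_Ici.mp hx])
    have hyε : y + ε ∈ Ioi a := mem_Ioi.mpr (by linarith [mem_Ici.mp hy])
    have hshift : s • (x + ε) + t • (y + ε) = s • x + t • y + ε := by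
      simp only [smul_eq_mul]; linear_combination ε * hst
    simpa only [hshift] using hf.2 hxε hyε hs ht hst
  exact le_of_tendsto_of_tendsto (shift _ hmem)
    (((shift x hx).const_smul s).add ((shift y hy).const_smul t))
    (eventually_nhdsWithin_of_forall shifted)

noncomputable def perspective (f : ℝ → ℝ) (q : ℝ × ℝ) : ℝ :=
  if q.1 = 0 then 0 else q.1 * f (q.2 / q.1)

def perspectiveDomain : Set (ℝ × ℝ) := {q | 0 ≤ q.1 ∧ 0 ≤ q.2 ∧ (q.1 = 0 → q.2 = 0)}

namespace perspectiveDomain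

theorem smul_mem {q : ℝ × ℝ} (hq : q ∈ perspectiveDomain) {c : ℝ} (hc : 0 ≤ c) :
    c • q ∈ perspectiveDomain := by
  obtain ⟨h1, h2, h0⟩ := hq
  refine ⟨mul_nonneg hc h1, mul_nonneg hc h2, fun h => ?_⟩
  rcases mul_eq_zero.mp h with h | h
  · simp [h]
  · simp [h0 h]

theorem add_mem {q r : ℝ × ℝ} (hq : q ∈ perspectiveDomain) (hr : r ∈ perspectiveDomain) :
    q + r ∈ perspectiveDomain := by
  obtain ⟨hq1, hq2, hq0⟩ := hq
  obtain ⟨hr1, hr2, hr0⟩ := hr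
  refine ⟨add_nonneg hq1 hr1, add_nonneg hq2 hr2, fun h => ?_⟩
  obtain ⟨hq, hr⟩ := (add_eq_zero_iff_of_nonneg hq1 hr1).mp h
  simp [hq0 hq, hr0 hr]

theorem convex : Convex ℝ perspectiveDomain :=
  fun _ hq _ hr _ _ hs ht _ => add_mem (smul_mem hq hs) (smul_mem hr ht)

end perspectiveDomain

theorem perspective_smul (f : ℝ → ℝ) (q : ℝ × ℝ) {c : ℝ} (hc : 0 ≤ c) :
    perspective f (c • q) = c * perspective f q := by
  rcases hc.eq_or_lt with rfl | hc
  · simp [perspective]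
  · simp only [perspective, Prod.smul_fst, Prod.smul_snd, smul_eq_mul, mul_eq_zero, hc.ne',
      false_or, mul_div_mul_left _ _ hc.ne']
    split_ifs <;> ring

theorem perspective_add_le {f : ℝ → ℝ} (hf : ConvexOn ℝ (Ici 0) f) {q r : ℝ × ℝ}
    (hq : q ∈ perspectiveDomain) (hr : r ∈ perspectiveDomain) :
    perspective f (q + r) ≤ perspective f q + perspective f r := by
  obtain ⟨hq1, hq2, hq0⟩ := hq
  obtain ⟨hr1, hr2, hr0⟩ := hr
  rcases hq1.eq_or_lt with hq1 | hq1
  · obtain rfl : q = 0 := Prod.ext hq1.symm (hq0 hq1.symm)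
    simp [perspective]
  rcases hr1.eq_or_lt with hr1 | hr1
  · obtain rfl : r = 0 := Prod.ext hr1.symm (hr0 hr1.symm)
    simp [perspective]
  have hS : 0 < q.1 + r.1 := add_pos hq1 hr1
  have hweights : q.1 / (q.1 + r.1) + r.1 / (q.1 + r.1) = 1 := by field_simp
  have hmix : (q.1 / (q.1 + r.1)) • (q.2 / q.1) + (r.1 / (q.1 + r.1)) • (r.2 / r.1) =
      (q.2 + r.2) / (q.1 + r.1) := by
    simp only [smul_eq_mul]; field_simp
  have key := hf.2 (mem_Ici.mpr (div_nonneg hq2 hq1.le)) (mem_Ici.mpr (div_nonneg hr2 hr1.le))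
    (div_nonneg hq1.le hS.le) (div_nonneg hr1.le hS.le) hweights
  rw [hmix] at key
  simp only [perspective, Prod.fst_add, Prod.snd_add, hS.ne', hq1.ne', hr1.ne', if_false]
  calc (q.1 + r.1) * f ((q.2 + r.2) / (q.1 + r.1))
      ≤ (q.1 + r.1) * ((q.1 / (q.1 + r.1)) • f (q.2 / q.1) + (r.1 / (q.1 + r.1)) • f (r.2 / r.1)) :=
        mul_le_mul_of_nonneg_left key hS.le
    _ = q.1 * f (q.2 / q.1) + r.1 * f (r.2 / r.1) := by simp only [smul_eq_mul]; field_simp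

theorem convexOn_perspective {f : ℝ → ℝ} (hf : ConvexOn ℝ (Ici 0) f) :
    ConvexOn ℝ perspectiveDomain (perspective f) :=
  ⟨perspectiveDomain.convex, fun q hq r hr s t hs ht _ => by
    simpa only [perspective_smul f _ hs, perspective_smul f _ ht, smul_eq_mul] using
      perspective_add_le hf (perspectiveDomain.smul_mem hq hs) (perspectiveDomain.smul_mem hr ht)⟩

section PrivCost

variable {X Y : Type*} [Fintype X] [Fintype Y]

-- The masses of `(x, y)` under the product `γ₁ ⊗ p₀` of the marginals and under `γ` itself.
def prodMarginalJoint (p₀ : Y → ℝ) (x : X) (y : Y) : (X × Y → ℝ) →ₗ[ℝ] ℝ × ℝ where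
  toFun γ := ((∑ y', γ (x, y')) * p₀ y, γ (x, y))
  map_add' γ μ := by simp [Finset.sum_add_distrib, add_mul]
  map_smul' c γ := by simp [← Finset.mul_sum, mul_assoc]

theorem privCost_eq_sum_perspective (p₀ : Y → ℝ) (f : ℝ → ℝ) :
    privCost p₀ f = ∑ x : X, ∑ y : Y, perspective f ∘ prodMarginalJoint p₀ x y := by
  ext γ
  simp only [privCost, Finset.sum_apply, Function.comp_apply, perspective, prodMarginalJoint,
    LinearMap.coe_mk, AddHom.coe_mk, mul_eq_zero]
  refine Finset.sum_congr rfl fun x _ => Finset.sum_congr rfl fun y _ => ?_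
  split_ifs <;> ring

theorem prodMarginalJoint_mem_perspectiveDomain {p₀ : Y → ℝ} {γ : X × Y → ℝ}
    (hγ : ∀ p, 0 ≤ γ p) (hmarg : ∀ y, ∑ x, γ (x, y) = p₀ y) (x : X) (y : Y) :
    prodMarginalJoint p₀ x y γ ∈ perspectiveDomain := by
  have hle₁ : γ (x, y) ≤ ∑ y', γ (x, y') :=
    Finset.single_le_sum (fun y' _ => hγ (x, y')) (Finset.mem_univ y)
  have hle₂ : γ (x, y) ≤ p₀ y :=
    hmarg y ▸ Finset.single_le_sum (fun x' _ => hγ (x', y)) (Finset.mem_univ x)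
  show 0 ≤ (∑ y', γ (x, y')) * p₀ y ∧ 0 ≤ γ (x, y) ∧ (_ = 0 → γ (x, y) = 0)
  refine ⟨mul_nonneg (by linarith [hγ (x, y)]) (by linarith [hγ (x, y)]), hγ (x, y), fun h => ?_⟩
  rcases mul_eq_zero.mp h with h | h <;> linarith [hγ (x, y)]

theorem convex_setOf_joint_marginal_eq (p₀ : Y → ℝ) :
    Convex ℝ {γ : X × Y → ℝ | (∀ p, 0 ≤ γ p) ∧ (∑ p : X × Y, γ p = 1) ∧
      ∀ y, ∑ x : X, γ (x, y) = p₀ y} := by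
  have hset : {γ : X × Y → ℝ | (∀ p, 0 ≤ γ p) ∧ (∑ p : X × Y, γ p = 1) ∧
      ∀ y, ∑ x : X, γ (x, y) = p₀ y} =
      Ici 0 ∩ ({γ | ∑ p, γ p = 1} ∩ ⋂ y, {γ | ∑ x, γ (x, y) = p₀ y}) := by
    ext γ; simp [Pi.le_def]
  have htotal : IsLinearMap ℝ fun γ : X × Y → ℝ => ∑ p, γ p :=
    ⟨fun _ _ => Finset.sum_add_distrib, fun _ _ => (Finset.mul_sum _ _ _).symm⟩
  have hmarginal (y : Y) : IsLinearMap ℝ fun γ : X × Y → ℝ => ∑ x, γ (x, y) :=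
    ⟨fun _ _ => Finset.sum_add_distrib, fun _ _ => (Finset.mul_sum _ _ _).symm⟩
  rw [hset]
  exact (convex_Ici 0).inter ((convex_hyperplane htotal 1).inter
    (convex_iInter fun y => convex_hyperplane (hmarginal y) (p₀ y)))

end PrivCost

theorem privCost_convexOn_general {X Y : Type*} [Fintype X] [Fintype Y]
    (p₀ : Y → ℝ)
    (f : ℝ → ℝ) (hf : ConvexOn ℝ (Set.Ioi (0 : ℝ)) f)
    (hf0 : Filter.Tendsto f (nhdsWithin 0 (Set.Ioi 0)) (nhds (f 0))) :
    ConvexOn ℝ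
      {γ : X × Y → ℝ | (∀ p, 0 ≤ γ p) ∧ (∑ p : X × Y, γ p = 1) ∧
        ∀ y, ∑ x : X, γ (x, y) = p₀ y}
      (privCost p₀ f) := by
  have hpersp := convexOn_perspective (hf.convexOn_Ici_of_continuousWithinAt hf0)
  rw [privCost_eq_sum_perspective]
  refine convexOn_finset_sum (convex_setOf_joint_marginal_eq p₀) _ fun x _ => ?_
  refine convexOn_finset_sum (convex_setOf_joint_marginal_eq p₀) _ fun y _ => ?_
  exact (hpersp.comp_linearMap (prodMarginalJoint p₀ x y)).subset
    (fun γ hγ => prodMarginalJoint_mem_perspectiveDomain hγ.1 hγ.2.2 x y)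
    (convex_setOf_joint_marginal_eq p₀)

/-- The privacy cost is convex on the set of joint distributions with `Y`-marginal `p₀`. -/
theorem privCost_convexOn {X Y : Type*} [Fintype X] [Fintype Y]
    (p₀ : Y → ℝ) (hp₀ : ∀ y, 0 ≤ p₀ y) (hp₀1 : ∑ y : Y, p₀ y = 1)
    (f : ℝ → ℝ) (hf : ConvexOn ℝ (Set.Ioi (0 : ℝ)) f) (hf1 : f 1 = 0)
    (hf0 : Filter.Tendsto f (nhdsWithin 0 (Set.Ioi 0)) (nhds (f 0))) :
    ConvexOn ℝ
      {γ : X × Y → ℝ | (∀ p, 0 ≤ γ p) ∧ (∑ p : X × Y, γ p = 1) ∧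
        ∀ y, ∑ x : X, γ (x, y) = p₀ y}
      (privCost p₀ f) :=
  privCost_convexOn_general p₀ f hf hf0
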